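/- arXiv:2004.09292 — 6 statements merged into one kernel-verified Lean document; each statement's English description precedes it below -/
import Mathlib

section
/- Let μ > 0, let k be a nonzero integer, let t ≥ 0, and let g ∈ L²(ℝ, ℂ). Then (∫_ℝ |g(η)|² · exp(−2μ·∫₀ᵗ (η − k·s)² ds) dη)^{1/2} ≤ e^{1/12} · exp(−(1/12)·μ^{1/3}·|k|^{2/3}·t) · ‖g‖_{L²(ℝ)}. -/
open MeasureTheory intervalIntegral

/-!
Completing the square, `∫₀ᵗ (η - k s)² ds = t (η - k t / 2)² + k² t³ / 12 ≥ k² t³ / 12`, so the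
Gaussian weight is at most `exp (-μ k² t³ / 6)` uniformly in `η`, and taking square roots gives
the factor `exp (-a³ / 12)` with `a = μ^{1/3} |k|^{2/3} t`. The enhanced-dissipation rate then
comes from the elementary inequality `a ≤ 1 + a³` for `a ≥ 0`.
-/

lemma integral_sub_mul_sq (η k t : ℝ) :
    ∫ s in (0 : ℝ)..t, (η - k * s) ^ 2 = t * (η - k * t / 2) ^ 2 + k ^ 2 * t ^ 3 / 12 := by
  have hexpand : ∀ s : ℝ, (η - k * s) ^ 2 = η ^ 2 - 2 * η * k * s + k ^ 2 * s ^ 2 :=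
    fun s => by ring
  simp only [hexpand]
  rw [intervalIntegral.integral_add, intervalIntegral.integral_sub,
    intervalIntegral.integral_const_mul, intervalIntegral.integral_const_mul, integral_id,
    integral_pow, intervalIntegral.integral_const]
  · simp only [smul_eq_mul]
    ring
  all_goals exact Continuous.intervalIntegrable (by fun_prop) _ _

lemma sq_mul_pow_three_div_twelve_le_integral (η k : ℝ) {t : ℝ} (ht : 0 ≤ t) :
    k ^ 2 * t ^ 3 / 12 ≤ ∫ s in (0 : ℝ)..t, (η - k * s) ^ 2 := by
  rw [integral_sub_mul_sq]
  nlinarith [mul_nonneg ht (sq_nonneg (η - k * t / 2))]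

lemma integral_mul_le_mul_integral {α : Type*} [MeasurableSpace α] {ν : Measure α}
    {f w : α → ℝ} {C : ℝ} (hf : Integrable f ν) (hf0 : 0 ≤ f) (hw0 : 0 ≤ w)
    (hwC : ∀ x, w x ≤ C) :
    ∫ x, f x * w x ∂ν ≤ C * ∫ x, f x ∂ν := by
  rw [← MeasureTheory.integral_const_mul]
  refine integral_mono_of_nonneg (.of_forall fun x => mul_nonneg (hf0 x) (hw0 x))
    (hf.const_mul C) (.of_forall fun x => ?_)
  simpa only [mul_comm C] using mul_le_mul_of_nonneg_left (hwC x) (hf0 x)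

lemma rpow_one_third_mul_rpow_two_thirds_pow_three {μ : ℝ} (hμ : 0 ≤ μ) (k t : ℝ) :
    (μ ^ ((1 : ℝ) / 3) * |k| ^ ((2 : ℝ) / 3) * t) ^ 3 = μ * k ^ 2 * t ^ 3 := by
  rw [mul_pow, mul_pow, ← Real.rpow_natCast (μ ^ ((1 : ℝ) / 3)),
    ← Real.rpow_natCast (|k| ^ ((2 : ℝ) / 3)), ← Real.rpow_mul hμ,
    ← Real.rpow_mul (abs_nonneg k)]
  norm_num

lemma exp_neg_pow_three_div_twelve_le {a : ℝ} (ha : 0 ≤ a) :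
    Real.exp (-(a ^ 3 / 12)) ≤ Real.exp (1 / 12) * Real.exp (-(1 / 12) * a) := by
  rw [← Real.exp_add, Real.exp_le_exp]
  nlinarith [mul_nonneg ha (sq_nonneg (a - 1)), sq_nonneg (a - 1)]

theorem stmt3_general (μ : ℝ) (hμ : 0 < μ) (k : ℤ) (t : ℝ) (ht : 0 ≤ t)
    (g : ℝ → ℂ) (hg : MemLp g 2 (volume : Measure ℝ)) :
    (∫ η : ℝ, ‖g η‖ ^ 2 *
        Real.exp (-(2 * μ) * ∫ s in (0 : ℝ)..t, (η - (k : ℝ) * s) ^ 2)) ^ ((1 : ℝ) / 2)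
      ≤ Real.exp (1 / 12) *
          Real.exp (-(1 / 12) * μ ^ ((1 : ℝ) / 3) * |(k : ℝ)| ^ ((2 : ℝ) / 3) * t) *
          (∫ η : ℝ, ‖g η‖ ^ 2) ^ ((1 : ℝ) / 2) := by
  set a := μ ^ ((1 : ℝ) / 3) * |(k : ℝ)| ^ ((2 : ℝ) / 3) * t
  have ha : 0 ≤ a := by positivity
  have ha3 : a ^ 3 = μ * (k : ℝ) ^ 2 * t ^ 3 :=
    rpow_one_third_mul_rpow_two_thirds_pow_three hμ.le _ _
  have hweight : ∀ η : ℝ, Real.exp (-(2 * μ) * ∫ s in (0 : ℝ)..t, (η - (k : ℝ) * s) ^ 2)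
      ≤ Real.exp (-(a ^ 3 / 6)) := fun η => by
    rw [Real.exp_le_exp, ha3]
    nlinarith [sq_mul_pow_three_div_twelve_le_integral η (k : ℝ) ht]
  have hL2 : Integrable (fun η => ‖g η‖ ^ 2) := hg.integrable_norm_pow two_ne_zero
  calc _ ≤ (Real.exp (-(a ^ 3 / 6)) * ∫ η : ℝ, ‖g η‖ ^ 2) ^ ((1 : ℝ) / 2) := by
        gcongr
        exact integral_mul_le_mul_integral hL2 (fun η => by positivity)
          (fun η => by positivity) hweight
    _ = Real.exp (-(a ^ 3 / 12)) * (∫ η : ℝ, ‖g η‖ ^ 2) ^ ((1 : ℝ) / 2) := by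
        rw [Real.mul_rpow (by positivity) (integral_nonneg fun η => by positivity),
          ← Real.exp_mul]
        ring_nf
    _ ≤ _ := by
        rw [mul_assoc (-(1 / 12 : ℝ)), mul_assoc (-(1 / 12 : ℝ))]
        gcongr
        exact exp_neg_pow_three_div_twelve_le ha

/-- Fourier-side decay estimate for the k-th mode of the linearized temperature equation:
for `μ > 0`, a nonzero integer `k`, `t ≥ 0` and `g ∈ L²(ℝ, ℂ)`,
`(∫ |g(η)|² exp(−2μ∫₀ᵗ(η − ks)² ds) dη)^{1/2}
  ≤ e^{1/12} · exp(−(1/12)μ^{1/3}|k|^{2/3}t) · ‖g‖_{L²}`. -/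
theorem stmt3 (μ : ℝ) (hμ : 0 < μ) (k : ℤ) (hk : k ≠ 0) (t : ℝ) (ht : 0 ≤ t)
    (g : ℝ → ℂ) (hg : MemLp g 2 (volume : Measure ℝ)) :
    (∫ η : ℝ, ‖g η‖ ^ 2 *
        Real.exp (-(2 * μ) * ∫ s in (0 : ℝ)..t, (η - (k : ℝ) * s) ^ 2)) ^ ((1 : ℝ) / 2)
      ≤ Real.exp (1 / 12) *
          Real.exp (-(1 / 12) * μ ^ ((1 : ℝ) / 3) * |(k : ℝ)| ^ ((2 : ℝ) / 3) * t) *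
          (∫ η : ℝ, ‖g η‖ ^ 2) ^ ((1 : ℝ) / 2) :=
  stmt3_general μ hμ k t ht g hg
end

section
/- Let φ : ℝ → ℝ be differentiable with φ′(s) ≥ 0 for all s and φ′(s) = 1/4 for all s with |s| ≤ 1. Then for every ν > 0, every nonzero integer k, and every ξ ∈ ℝ, one has ν·ξ² + ν^{1/3}·|k|^{2/3}·φ′(ν^{1/3}·|k|^{−1/3}·sgn(k)·ξ) ≥ (1/4)·ν^{1/3}·|k|^{2/3}. -/
/-- Key multiplier lower bound: if `φ` is differentiable with `φ′ ≥ 0` and `φ′ = 1/4` on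
`[−1,1]`, then for `ν > 0`, nonzero integer `k` and `ξ ∈ ℝ`,
`ν·ξ² + ν^{1/3}·|k|^{2/3}·φ′(ν^{1/3}|k|^{−1/3}·sgn(k)·ξ) ≥ (1/4)·ν^{1/3}·|k|^{2/3}`. -/
theorem stmt4 (φ : ℝ → ℝ) (hφ : Differentiable ℝ φ)
    (hd0 : ∀ s : ℝ, 0 ≤ deriv φ s) (hd14 : ∀ s : ℝ, |s| ≤ 1 → deriv φ s = 1 / 4)
    (ν : ℝ) (hν : 0 < ν) (k : ℤ) (hk : k ≠ 0) (ξ : ℝ) :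
    (1 / 4) * ν ^ ((1 : ℝ) / 3) * |(k : ℝ)| ^ ((2 : ℝ) / 3)
      ≤ ν * ξ ^ 2 + ν ^ ((1 : ℝ) / 3) * |(k : ℝ)| ^ ((2 : ℝ) / 3) *
          deriv φ (ν ^ ((1 : ℝ) / 3) * |(k : ℝ)| ^ (-(1 : ℝ) / 3) * (k.sign : ℝ) * ξ) := by
  have hkpos : (0 : ℝ) < |(k : ℝ)| := by
    simp [abs_pos, Int.cast_ne_zero, hk]
  set a : ℝ := ν ^ ((1 : ℝ) / 3) with ha
  set b : ℝ := |(k : ℝ)| ^ ((2 : ℝ) / 3) with hb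
  set c : ℝ := |(k : ℝ)| ^ (-(1 : ℝ) / 3) with hc
  have hapos : 0 < a := Real.rpow_pos_of_pos hν _
  have hbpos : 0 < b := Real.rpow_pos_of_pos hkpos _
  have hcpos : 0 < c := Real.rpow_pos_of_pos hkpos _
  have ha3 : a ^ 3 = ν := by
    rw [ha, ← Real.rpow_natCast (ν ^ ((1:ℝ)/3)) 3, ← Real.rpow_mul hν.le]
    norm_num
  have hbc : b * c ^ 2 = 1 := by
    rw [hb, hc, ← Real.rpow_natCast (|(k:ℝ)| ^ (-(1:ℝ)/3)) 2, ← Real.rpow_mul hkpos.le,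
      ← Real.rpow_add hkpos]
    norm_num
  have hsign : |(k.sign : ℝ)| = 1 := by
    rcases Int.lt_or_lt_of_ne hk with h | h
    · simp [Int.sign_eq_neg_one_of_neg h]
    · simp [Int.sign_eq_one_of_pos h]
  set s : ℝ := a * c * (k.sign : ℝ) * ξ with hs
  have habs : |s| = a * c * |ξ| := by
    rw [hs, abs_mul, abs_mul, abs_mul, hsign, abs_of_pos hapos, abs_of_pos hcpos]
    ring
  rcases le_or_gt (|s|) 1 with h1 | h1
  · rw [hd14 s h1]
    nlinarith [sq_nonneg ξ, mul_pos hapos hbpos]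
  · have hd : 0 ≤ deriv φ s := hd0 s
    have h2 : 1 ≤ (a * c * |ξ|) ^ 2 := by
      have := (habs ▸ h1).le
      nlinarith [abs_nonneg s]
    have hξ2 : ξ ^ 2 = |ξ| ^ 2 := (sq_abs ξ).symm
    have key : a * b ≤ ν * ξ ^ 2 := by
      rw [← ha3, hξ2]
      nlinarith [mul_pos hapos hbpos, sq_nonneg (a * c * |ξ|), mul_pos (mul_pos hapos hapos) hbpos]
    nlinarith [mul_pos hapos hbpos, mul_nonneg (mul_pos hapos hbpos).le hd]
end

section
/- Let φ : ℝ → ℝ be differentiable with 0 ≤ φ ≤ 1, φ′ ≥ 0, and φ′(s) = 1/4 for |s| ≤ 1. Fix ν > 0 and define 𝓜(k,ξ) = 1 + φ(ν^{1/3}|k|^{−1/3}sgn(k)ξ) + (1/k²)(arctan(ξ/k) + π/2) for integer k ≠ 0 and real ξ. Then for every nonzero integer k and every ξ ∈ ℝ: 2ν·ξ²·𝓜(k,ξ) + ν^{1/3}·|k|^{2/3}·φ′(ν^{1/3}|k|^{−1/3}sgn(k)ξ) + 1/(k² + ξ²) ≥ ν·ξ² + (1/4)·ν^{1/3}·|k|^{2/3}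 + 1/(ξ² + k²). -/
/-- Pointwise symbol inequality (vertical-dissipation version): for `φ` differentiable with
`0 ≤ φ ≤ 1`, `φ′ ≥ 0` and `φ′ = 1/4` on `[−1,1]`, `ν > 0`, nonzero integer `k`, `ξ ∈ ℝ`:
`2νξ²𝓜(k,ξ) + ν^{1/3}|k|^{2/3}φ′(ν^{1/3}|k|^{−1/3}sgn(k)ξ) + 1/(k²+ξ²)
  ≥ νξ² + (1/4)ν^{1/3}|k|^{2/3} + 1/(ξ²+k²)`. -/
theorem stmt7 (φ : ℝ → ℝ) (hφ : Differentiable ℝ φ)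
    (h0 : ∀ s : ℝ, 0 ≤ φ s) (h1 : ∀ s : ℝ, φ s ≤ 1)
    (hd0 : ∀ s : ℝ, 0 ≤ deriv φ s) (hd14 : ∀ s : ℝ, |s| ≤ 1 → deriv φ s = 1 / 4)
    (ν : ℝ) (hν : 0 < ν) (k : ℤ) (hk : k ≠ 0) (ξ : ℝ) :
    ν * ξ ^ 2 + (1 / 4) * ν ^ ((1 : ℝ) / 3) * |(k : ℝ)| ^ ((2 : ℝ) / 3)
        + 1 / (ξ ^ 2 + (k : ℝ) ^ 2)
      ≤ 2 * ν * ξ ^ 2 *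
          (1 + φ (ν ^ ((1 : ℝ) / 3) * |(k : ℝ)| ^ (-(1 : ℝ) / 3) * (k.sign : ℝ) * ξ)
            + (1 / (k : ℝ) ^ 2) * (Real.arctan (ξ / (k : ℝ)) + Real.pi / 2))
        + ν ^ ((1 : ℝ) / 3) * |(k : ℝ)| ^ ((2 : ℝ) / 3) *
            deriv φ (ν ^ ((1 : ℝ) / 3) * |(k : ℝ)| ^ (-(1 : ℝ) / 3) * (k.sign : ℝ) * ξ)
        + 1 / ((k : ℝ) ^ 2 + ξ ^ 2) := by
  have hkR : (k : ℝ) ≠ 0 := Int.cast_ne_zero.mpr hk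
  have hkpos : (0 : ℝ) < |(k : ℝ)| := abs_pos.mpr hkR
  set A := ν ^ ((1 : ℝ) / 3) with hA
  set B := |(k : ℝ)| ^ ((2 : ℝ) / 3) with hB
  set C := |(k : ℝ)| ^ (-(1 : ℝ) / 3) with hC
  have hApos : 0 < A := Real.rpow_pos_of_pos hν _
  have hBpos : 0 < B := Real.rpow_pos_of_pos hkpos _
  have hCpos : 0 < C := Real.rpow_pos_of_pos hkpos _
  set s := A * C * (k.sign : ℝ) * ξ with hs
  have hsign : |(k.sign : ℝ)| = 1 := by
    rcases hk.lt_or_gt with h | h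
    · rw [Int.sign_eq_neg_one_of_neg h]; norm_num
    · rw [Int.sign_eq_one_of_pos h]; norm_num
  have habs : |s| = A * C * |ξ| := by
    rw [hs, abs_mul, abs_mul, abs_mul, hsign, abs_of_pos hApos, abs_of_pos hCpos]
    ring
  have harct : 0 ≤ Real.arctan (ξ / (k : ℝ)) + Real.pi / 2 := by
    linarith [Real.neg_pi_div_two_lt_arctan (ξ / (k : ℝ))]
  have hk2 : (0 : ℝ) < (k : ℝ) ^ 2 := by positivity
  have hM : (1 : ℝ) ≤ 1 + φ s + (1 / (k : ℝ) ^ 2) * (Real.arctan (ξ / (k : ℝ)) + Real.pi / 2) := by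
    have h3 : 0 ≤ (1 / (k : ℝ) ^ 2) * (Real.arctan (ξ / (k : ℝ)) + Real.pi / 2) :=
      mul_nonneg (by positivity) harct
    linarith [h0 s]
  have hMmul : ν * ξ ^ 2 ≤ 2 * ν * ξ ^ 2 *
      (1 + φ s + (1 / (k : ℝ) ^ 2) * (Real.arctan (ξ / (k : ℝ)) + Real.pi / 2)) := by
    nlinarith [mul_nonneg (mul_nonneg hν.le (sq_nonneg ξ)) (by linarith :
      (0 : ℝ) ≤ φ s + (1 / (k : ℝ) ^ 2) * (Real.arctan (ξ / (k : ℝ)) + Real.pi / 2)),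
      mul_nonneg hν.le (sq_nonneg ξ)]
  have hinv : 1 / (ξ ^ 2 + (k : ℝ) ^ 2) = 1 / ((k : ℝ) ^ 2 + ξ ^ 2) := by rw [add_comm]
  by_cases hcase : |s| ≤ 1
  · rw [hd14 s hcase]
    linarith [hMmul]
  · push_neg at hcase
    rw [habs] at hcase
    have hA3 : A ^ 3 = ν := by
      rw [hA, ← Real.rpow_natCast (ν ^ ((1 : ℝ) / 3)) 3, ← Real.rpow_mul hν.le]
      norm_num
    have hCB : C ^ 2 * B = 1 := by
      rw [hC, hB, ← Real.rpow_natCast (|(k : ℝ)| ^ (-(1 : ℝ) / 3)) 2,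
        ← Real.rpow_mul (abs_nonneg _), ← Real.rpow_add hkpos]
      norm_num
    have h2 : 1 < (A * C * |ξ|) ^ 2 := by nlinarith [mul_pos hApos hCpos, abs_nonneg ξ]
    have key : A * B < ν * ξ ^ 2 := by
      calc A * B = A * B * 1 := by ring
        _ < A * B * (A * C * |ξ|) ^ 2 :=
            (mul_lt_mul_iff_right₀ (mul_pos hApos hBpos)).mpr h2
        _ = A ^ 3 * (C ^ 2 * B) * |ξ| ^ 2 := by ring
        _ = ν * ξ ^ 2 := by rw [hA3, hCB, sq_abs]; ring
    have hderiv : 0 ≤ A * B * deriv φ s :=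
      mul_nonneg (mul_pos hApos hBpos).le (hd0 s)
    have h2M : 2 * ν * ξ ^ 2 ≤ 2 * ν * ξ ^ 2 *
        (1 + φ s + (1 / (k : ℝ) ^ 2) * (Real.arctan (ξ / (k : ℝ)) + Real.pi / 2)) := by
      nlinarith [mul_nonneg (mul_nonneg hν.le (sq_nonneg ξ)) (by linarith :
        (0 : ℝ) ≤ φ s + (1 / (k : ℝ) ^ 2) * (Real.arctan (ξ / (k : ℝ)) + Real.pi / 2))]
    linarith [h2M, key, hderiv, mul_pos hApos hBpos, hinv]
end

section
/- Let φ : ℝ → ℝ be differentiable with 0 ≤ φ ≤ 1, φ′ ≥ 0, and φ′(s) = 1/4 for |s| ≤ 1. Fix ν > 0 and define 𝓜(k,ξ) = 1 + φ(ν^{1/3}|k|^{−1/3}sgn(k)ξ) + (1/k²)(arctan(ξ/k) + π/2) for integer k ≠ 0 and real ξ. Then for every nonzero integer k and every ξ ∈ ℝ: 2ν·(ξ² + k²)·𝓜(k,ξ) + ν^{1/3}·|k|^{2/3}·φ′(ν^{1/3}|k|^{−1/3}sgn(k)ξ) + 1/(k² + ξ²) ≥ ν·(ξ² + k²) + (1/4)·ν^{1/3}·|k|^{2/3}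 + 1/(ξ² + k²). -/
/-- Pointwise symbol inequality (full-dissipation version): for `φ` differentiable with
`0 ≤ φ ≤ 1`, `φ′ ≥ 0` and `φ′ = 1/4` on `[−1,1]`, `ν > 0`, nonzero integer `k`, `ξ ∈ ℝ`:
`2ν(ξ²+k²)𝓜(k,ξ) + ν^{1/3}|k|^{2/3}φ′(ν^{1/3}|k|^{−1/3}sgn(k)ξ) + 1/(k²+ξ²)
  ≥ ν(ξ²+k²) + (1/4)ν^{1/3}|k|^{2/3} + 1/(ξ²+k²)`. -/
theorem stmt8 (φ : ℝ → ℝ) (hφ : Differentiable ℝ φ)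
    (h0 : ∀ s : ℝ, 0 ≤ φ s) (h1 : ∀ s : ℝ, φ s ≤ 1)
    (hd0 : ∀ s : ℝ, 0 ≤ deriv φ s) (hd14 : ∀ s : ℝ, |s| ≤ 1 → deriv φ s = 1 / 4)
    (ν : ℝ) (hν : 0 < ν) (k : ℤ) (hk : k ≠ 0) (ξ : ℝ) :
    ν * (ξ ^ 2 + (k : ℝ) ^ 2) + (1 / 4) * ν ^ ((1 : ℝ) / 3) * |(k : ℝ)| ^ ((2 : ℝ) / 3)
        + 1 / (ξ ^ 2 + (k : ℝ) ^ 2)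
      ≤ 2 * ν * (ξ ^ 2 + (k : ℝ) ^ 2) *
          (1 + φ (ν ^ ((1 : ℝ) / 3) * |(k : ℝ)| ^ (-(1 : ℝ) / 3) * (k.sign : ℝ) * ξ)
            + (1 / (k : ℝ) ^ 2) * (Real.arctan (ξ / (k : ℝ)) + Real.pi / 2))
        + ν ^ ((1 : ℝ) / 3) * |(k : ℝ)| ^ ((2 : ℝ) / 3) *
            deriv φ (ν ^ ((1 : ℝ) / 3) * |(k : ℝ)| ^ (-(1 : ℝ) / 3) * (k.sign : ℝ) * ξ)
        + 1 / ((k : ℝ) ^ 2 + ξ ^ 2) := by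
  have hk' : (k : ℝ) ≠ 0 := by exact_mod_cast hk
  have hkabs : 0 < |(k : ℝ)| := abs_pos.mpr hk'
  have hk2 : (0 : ℝ) < (k : ℝ) ^ 2 := by positivity
  have hS : (0 : ℝ) < ξ ^ 2 + (k : ℝ) ^ 2 := by positivity
  set p : ℝ := ν ^ ((1 : ℝ) / 3) with hp
  set b : ℝ := |(k : ℝ)| ^ ((2 : ℝ) / 3) with hb
  set c : ℝ := |(k : ℝ)| ^ (-(1 : ℝ) / 3) with hc
  have hpp : 0 < p := Real.rpow_pos_of_pos hν _
  have hbp : 0 < b := Real.rpow_pos_of_pos hkabs _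
  have hcp : 0 < c := Real.rpow_pos_of_pos hkabs _
  set A : ℝ := p * c * ((k.sign : ℤ) : ℝ) * ξ with hA
  -- M ≥ 1
  have harct : 0 ≤ Real.arctan (ξ / (k : ℝ)) + Real.pi / 2 := by
    have := Real.neg_pi_div_two_lt_arctan (ξ / (k : ℝ))
    linarith
  have hM1 : (1 : ℝ) ≤ 1 + φ A + (1 / (k : ℝ) ^ 2) * (Real.arctan (ξ / (k : ℝ)) + Real.pi / 2) := by
    have h2 := h0 A
    have h3 : 0 ≤ (1 / (k : ℝ) ^ 2) * (Real.arctan (ξ / (k : ℝ)) + Real.pi / 2) := by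
      apply mul_nonneg (by positivity) harct
    linarith
  rw [add_comm ((k : ℝ) ^ 2) (ξ ^ 2)]
  rcases le_or_gt |A| 1 with hcase | hcase
  · rw [hd14 A hcase]
    nlinarith [mul_pos hν hS, mul_pos hpp hbp]
  · -- |A| > 1 case
    have hsgn : |((k.sign : ℤ) : ℝ)| = 1 := by
      rcases lt_trichotomy k 0 with h | h | h
      · rw [Int.sign_eq_neg_one_iff_neg.mpr h]; norm_num
      · exact absurd h hk
      · rw [Int.sign_eq_one_iff_pos.mpr h]; norm_num
    have hAabs : |A| = p * c * |ξ| := by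
      rw [hA, abs_mul, abs_mul, abs_mul, hsgn, abs_of_pos hpp, abs_of_pos hcp]
      ring
    have hkey : p * b < ν * ξ ^ 2 := by
      have h4 : 1 < (p * c * |ξ|) ^ 2 := by
        have := hcase
        rw [hAabs] at this
        nlinarith [abs_nonneg A]
      have hq : p * p = ν ^ ((2 : ℝ) / 3) := by
        rw [hp, ← Real.rpow_add hν]; norm_num
      have hpq : p * ν ^ ((2 : ℝ) / 3) = ν := by
        rw [hp, ← Real.rpow_add hν]; norm_num
      have hcc : c * c = |(k : ℝ)| ^ (-(2 : ℝ) / 3) := by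
        rw [hc, ← Real.rpow_add hkabs]; norm_num
      have hbd : b * |(k : ℝ)| ^ (-(2 : ℝ) / 3) = 1 := by
        rw [hb, ← Real.rpow_add hkabs]; norm_num
      have hsq : ξ ^ 2 = |ξ| ^ 2 := (sq_abs ξ).symm
      have hexp : (p * c * |ξ|) ^ 2 = (p * p) * (c * c) * |ξ| ^ 2 := by ring
      rw [hexp, hq, hcc] at h4
      -- 1 < ν^{2/3} * |k|^{-2/3} * |ξ|^2 ; multiply by p * b > 0
      have := mul_lt_mul_of_pos_left h4 (mul_pos hpp hbp)
      calc p * b = p * b * 1 := by ring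
        _ < p * b * (ν ^ ((2 : ℝ) / 3) * |(k : ℝ)| ^ (-(2 : ℝ) / 3) * |ξ| ^ 2) := this
        _ = (p * ν ^ ((2 : ℝ) / 3)) * (b * |(k : ℝ)| ^ (-(2 : ℝ) / 3)) * |ξ| ^ 2 := by ring
        _ = ν * ξ ^ 2 := by rw [hpq, hbd, ← hsq]; ring
    have hD := hd0 A
    nlinarith [mul_pos hν hS, mul_pos hpp hbp, mul_nonneg (mul_nonneg hpp.le hbp.le) hD]
end

section
/- Let b ≥ 0 and t ∈ ℝ, and write Λ_t^b(k,ξ) = (1 + k² + (ξ + k·t)²)^{b/2}. Let F, G : ℤ × ℝ → ℂ be measurable functions with ‖F‖_{L¹} := ∑_l ∫ |F(l,η)| dη, ‖G‖_{L¹}, ‖Λ_t^b F‖_{L²} := (∑_l ∫ Λ_t^b(l,η)²|F(l,η)|² dη)^{1/2} and ‖Λ_t^b G‖_{L²} all finite, and define the convolution H(k,ξ) = ∑_{l ∈ ℤ} ∫_ℝ F(l,η)·G(k−l, ξ−η) dη. Then ( ∑_k ∫ Λ_t^b(k,ξ)² |H(k,ξ)|² dξ )^{1/2} ≤ 2^b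 · ( ‖F‖_{L¹} · ‖Λ_t^b G‖_{L²} + ‖G‖_{L¹} · ‖Λ_t^b F‖_{L²} ). -/
/-!
With `f = |F|`, `g = |G|` and `w = Λ_t^b`, the triangle inequality gives `w |F ∗ G| ≤ w (f ∗ g)`.
Since `Λ_t²` is `1` plus a positive semidefinite quadratic form in `(k, ξ)`, it satisfies
`Λ_t²(p + q) ≤ 2 (Λ_t²(p) + Λ_t²(q))`, hence `w (p + q) ≤ 2^b (w p + w q)`, and therefore
`w (f ∗ g) ≤ 2^b (f ∗ w g + g ∗ w f)` pointwise. Minkowski's inequality and Young's inequality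
`‖f ∗ h‖₂ ≤ ‖f‖₁ ‖h‖₂` finish the proof; the latter is Cauchy–Schwarz against the measure `f`,
followed by Tonelli and the translation invariance of counting × Lebesgue measure.
-/

open MeasureTheory

open scoped ENNReal

theorem ENNReal.lintegral_mul_sq_le {α : Type*} [MeasurableSpace α] {ν : Measure α}
    {f g : α → ℝ≥0∞} (hf : AEMeasurable f ν) (hg : AEMeasurable g ν) :
    (∫⁻ a, f a * g a ∂ν) ^ 2 ≤ (∫⁻ a, f a ∂ν) * ∫⁻ a, f a * g a ^ 2 ∂ν := by
  have hHolder := ENNReal.lintegral_mul_norm_pow_le hf (hf.mul (hg.pow_const 2))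
    (p := 1 / 2) (q := 1 / 2) (by norm_num) (by norm_num) (by norm_num)
  have hsqrt (a : α) : f a ^ (1 / 2 : ℝ) * (f a * g a ^ 2) ^ (1 / 2 : ℝ) = f a * g a := by
    rw [← ENNReal.mul_rpow_of_nonneg _ _ (by norm_num), ← mul_assoc, ← sq, ← mul_pow,
      ← ENNReal.rpow_natCast, ← ENNReal.rpow_mul]
    norm_num
  simp only [Pi.mul_apply, hsqrt] at hHolder
  calc (∫⁻ a, f a * g a ∂ν) ^ 2
      ≤ ((∫⁻ a, f a ∂ν) ^ (1 / 2 : ℝ) * (∫⁻ a, f a * g a ^ 2 ∂ν) ^ (1 / 2 : ℝ)) ^ 2 := by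
        gcongr
    _ = (∫⁻ a, f a ∂ν) * ∫⁻ a, f a * g a ^ 2 ∂ν := by
      rw [mul_pow, ← ENNReal.rpow_natCast, ← ENNReal.rpow_natCast (_ ^ _), ← ENNReal.rpow_mul,
        ← ENNReal.rpow_mul]
      norm_num

theorem ENNReal.rpow_half_le_two_rpow_mul_add {x y z : ℝ≥0∞} {b : ℝ} (hb : 0 ≤ b)
    (h : x ≤ 2 * (y + z)) : x ^ (b / 2) ≤ 2 ^ b * (y ^ (b / 2) + z ^ (b / 2)) := by
  have hmax : y + z ≤ 2 * max y z := by
    rw [two_mul]; exact add_le_add (le_max_left y z) (le_max_right y z)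
  calc x ^ (b / 2) ≤ ((2 : ℝ≥0∞) ^ (2 : ℝ) * max y z) ^ (b / 2) := by
        gcongr
        calc x ≤ 2 * (y + z) := h
          _ ≤ 2 * (2 * max y z) := by gcongr
          _ = (2 : ℝ≥0∞) ^ (2 : ℝ) * max y z := by rw [ENNReal.rpow_two, ← mul_assoc, sq]
    _ = 2 ^ b * max (y ^ (b / 2)) (z ^ (b / 2)) := by
        rw [ENNReal.mul_rpow_of_nonneg _ _ (by positivity), ← ENNReal.rpow_mul,
          (ENNReal.monotone_rpow_of_nonneg (by positivity)).map_max]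
        ring_nf
    _ ≤ 2 ^ b * (y ^ (b / 2) + z ^ (b / 2)) := by
        gcongr; exact max_le le_self_add le_add_self

section eLpNormTwo

variable {α : Type*} [MeasurableSpace α] {ν : Measure α}

theorem eLpNorm_two_eq_lintegral_sq (φ : α → ℝ≥0∞) :
    eLpNorm φ 2 ν = (∫⁻ a, φ a ^ 2 ∂ν) ^ (1 / 2 : ℝ) := by
  simp [eLpNorm_eq_lintegral_rpow_enorm_toReal two_ne_zero ENNReal.ofNat_ne_top]

theorem eLpNorm_two_const_mul {φ : α → ℝ≥0∞} (hφ : AEMeasurable φ ν) (c : ℝ≥0∞) :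
    eLpNorm (fun a => c * φ a) 2 ν = c * eLpNorm φ 2 ν := by
  simp only [eLpNorm_two_eq_lintegral_sq, mul_pow]
  rw [lintegral_const_mul'' _ (hφ.pow_const 2), ENNReal.mul_rpow_of_nonneg _ _ (by norm_num),
    ← ENNReal.rpow_natCast, ← ENNReal.rpow_mul]
  norm_num

end eLpNormTwo

section Convolution

variable {G : Type*} [MeasurableSpace G] {μ : Measure G}
  [AddGroup G] [MeasurableAdd₂ G] [MeasurableNeg G] {f g w : G → ℝ≥0∞}

theorem lconvolution_sq_le_mul_lconvolution_sq (hf : Measurable f) (hg : Measurable g) (x : G) :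
    (f ⋆ₗ[μ] g) x ^ 2 ≤ (∫⁻ y, f y ∂μ) * (f ⋆ₗ[μ] g ^ 2) x :=
  ENNReal.lintegral_mul_sq_le hf.aemeasurable (by fun_prop)

theorem lintegral_lconvolution [SFinite μ] [μ.IsAddLeftInvariant]
    (hf : Measurable f) (hg : Measurable g) :
    ∫⁻ x, (f ⋆ₗ[μ] g) x ∂μ = (∫⁻ y, f y ∂μ) * ∫⁻ x, g x ∂μ := by
  simp only [lconvolution_def]
  rw [lintegral_lintegral_swap (by fun_prop), ← lintegral_mul_const _ hf]
  congr 1 with y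
  rw [lintegral_const_mul _ (by fun_prop), lintegral_add_left_eq_self (fun x => g x) (-y)]

theorem lintegral_lconvolution_sq_le [SFinite μ] [μ.IsAddLeftInvariant]
    (hf : Measurable f) (hg : Measurable g) :
    ∫⁻ x, (f ⋆ₗ[μ] g) x ^ 2 ∂μ ≤ (∫⁻ y, f y ∂μ) ^ 2 * ∫⁻ x, g x ^ 2 ∂μ :=
  calc ∫⁻ x, (f ⋆ₗ[μ] g) x ^ 2 ∂μ ≤ ∫⁻ x, (∫⁻ y, f y ∂μ) * (f ⋆ₗ[μ] g ^ 2) x ∂μ :=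
        lintegral_mono (lconvolution_sq_le_mul_lconvolution_sq hf hg)
    _ = (∫⁻ y, f y ∂μ) ^ 2 * ∫⁻ x, g x ^ 2 ∂μ := by
        have hg2 : Measurable (g ^ 2) := hg.pow_const 2
        rw [lintegral_const_mul _ (measurable_lconvolution μ hf hg2),
          lintegral_lconvolution hf hg2, ← mul_assoc, ← sq]
        rfl

theorem eLpNorm_lconvolution_le [SFinite μ] [μ.IsAddLeftInvariant]
    (hf : Measurable f) (hg : Measurable g) :
    eLpNorm (f ⋆ₗ[μ] g) 2 μ ≤ (∫⁻ y, f y ∂μ) * eLpNorm g 2 μ := by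
  rw [eLpNorm_two_eq_lintegral_sq, eLpNorm_two_eq_lintegral_sq]
  calc (∫⁻ x, (f ⋆ₗ[μ] g) x ^ 2 ∂μ) ^ (1 / 2 : ℝ)
      ≤ ((∫⁻ y, f y ∂μ) ^ 2 * ∫⁻ x, g x ^ 2 ∂μ) ^ (1 / 2 : ℝ) := by
        gcongr; exact lintegral_lconvolution_sq_le hf hg
    _ = (∫⁻ y, f y ∂μ) * (∫⁻ x, g x ^ 2 ∂μ) ^ (1 / 2 : ℝ) := by
        rw [ENNReal.mul_rpow_of_nonneg _ _ (by norm_num), ← ENNReal.rpow_natCast,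
          ← ENNReal.rpow_mul]
        norm_num

theorem lconvolution_weight_le {c : ℝ≥0∞} (hw : Measurable w) (hf : Measurable f)
    (hg : Measurable g) (hsub : ∀ y z, w (y + z) ≤ c * (w y + w z)) (x : G) :
    w x * (f ⋆ₗ[μ] g) x ≤ c * ((f ⋆ₗ[μ] (w * g)) x + ((w * f) ⋆ₗ[μ] g) x) := by
  simp only [lconvolution_def, Pi.mul_apply]
  calc w x * ∫⁻ y, f y * g (-y + x) ∂μ = ∫⁻ y, w (y + (-y + x)) * (f y * g (-y + x)) ∂μ := by
        rw [← lintegral_const_mul _ (by fun_prop)]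
        simp
    _ ≤ ∫⁻ y, c * (w y + w (-y + x)) * (f y * g (-y + x)) ∂μ := by gcongr with y; exact hsub _ _
    _ = ∫⁻ y, c * (f y * (w (-y + x) * g (-y + x))) + c * (w y * f y * g (-y + x)) ∂μ := by
        congr 1 with y; ring
    _ = c * ((∫⁻ y, f y * (w (-y + x) * g (-y + x)) ∂μ) + ∫⁻ y, w y * f y * g (-y + x) ∂μ) := by
        rw [lintegral_add_left (by fun_prop), lintegral_const_mul _ (by fun_prop),
          lintegral_const_mul _ (by fun_prop), mul_add]

end Convolution

instance MeasureTheory.Measure.prod.instIsNegInvariant {G H : Type*} [MeasurableSpace G] [MeasurableSpace H]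
    [InvolutiveNeg G] [InvolutiveNeg H] [MeasurableNeg G] [MeasurableNeg H]
    (μ : Measure G) (ν : Measure H) [SFinite μ] [SFinite ν] [μ.IsNegInvariant]
    [ν.IsNegInvariant] : (μ.prod ν).IsNegInvariant :=
  ⟨by rw [Measure.neg, show (Neg.neg : G × H → G × H) = Prod.map Neg.neg Neg.neg from rfl,
    ← Measure.map_prod_map _ _ measurable_neg measurable_neg, Measure.map_neg_eq_self,
    Measure.map_neg_eq_self]⟩

section CountProd

variable {α β : Type*} [MeasurableSpace α] [MeasurableSingletonClass α] [MeasurableSpace β]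
  (ν : Measure β) [SFinite ν] {φ : α × β → ℝ≥0∞}

theorem lintegral_count_prod (hφ : Measurable φ) :
    ∫⁻ p, φ p ∂(Measure.count.prod ν) = ∑' a, ∫⁻ y, φ (a, y) ∂ν := by
  rw [lintegral_prod _ hφ.aemeasurable, lintegral_count]

theorem eLpNorm_two_count_prod (hφ : Measurable φ) :
    eLpNorm φ 2 (Measure.count.prod ν) = (∑' a, ∫⁻ y, φ (a, y) ^ 2 ∂ν) ^ (1 / 2 : ℝ) := by
  rw [eLpNorm_two_eq_lintegral_sq, lintegral_count_prod ν (hφ.pow_const 2)]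

end CountProd

/-- `Λ_t(k, ξ)²`. -/
def lambdaSq (t : ℝ) (p : ℤ × ℝ) : ℝ := 1 + (p.1 : ℝ) ^ 2 + (p.2 + p.1 * t) ^ 2

/-- `Λ_t^b(k, ξ)`. -/
noncomputable def lambdaPow (b t : ℝ) (p : ℤ × ℝ) : ℝ≥0∞ := ENNReal.ofReal (lambdaSq t p) ^ (b / 2)

theorem lambdaSq_pos (t : ℝ) (p : ℤ × ℝ) : 0 < lambdaSq t p := by
  unfold lambdaSq; positivity

theorem lambdaSq_add_le (t : ℝ) (p q : ℤ × ℝ) :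
    lambdaSq t (p + q) ≤ 2 * (lambdaSq t p + lambdaSq t q) := by
  simp only [lambdaSq, Prod.fst_add, Prod.snd_add, Int.cast_add]
  nlinarith [sq_nonneg ((p.1 : ℝ) - q.1), sq_nonneg ((p.2 + p.1 * t) - (q.2 + q.1 * t))]

theorem lambdaPow_add_le {b : ℝ} (hb : 0 ≤ b) (t : ℝ) (p q : ℤ × ℝ) :
    lambdaPow b t (p + q) ≤ 2 ^ b * (lambdaPow b t p + lambdaPow b t q) := by
  refine ENNReal.rpow_half_le_two_rpow_mul_add hb ?_
  rw [← ENNReal.ofReal_ofNat 2, ← ENNReal.ofReal_add (lambdaSq_pos t p).le (lambdaSq_pos t q).le,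
    ← ENNReal.ofReal_mul zero_le_two]
  exact ENNReal.ofReal_le_ofReal (lambdaSq_add_le t p q)

theorem measurable_lambdaPow (b t : ℝ) : Measurable (lambdaPow b t) := by
  unfold lambdaPow lambdaSq; fun_prop

theorem ofReal_lambdaSq_rpow_mul_sq (b t : ℝ) (k : ℤ) (ξ : ℝ) (z : ℂ) :
    ENNReal.ofReal ((1 + (k : ℝ) ^ 2 + (ξ + k * t) ^ 2) ^ b * ‖z‖ ^ 2)
      = (lambdaPow b t (k, ξ) * ‖z‖ₑ) ^ 2 := by
  change ENNReal.ofReal (lambdaSq t (k, ξ) ^ b * ‖z‖ ^ 2) = _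
  rw [ENNReal.ofReal_mul (Real.rpow_nonneg (lambdaSq_pos t _).le _),
    ← ENNReal.ofReal_rpow_of_pos (lambdaSq_pos t _), ENNReal.ofReal_pow (norm_nonneg z),
    ofReal_norm, mul_pow, lambdaPow, ← ENNReal.rpow_mul_natCast]
  norm_num

theorem enorm_tsum_integral_mul_le_lconvolution {𝕜 : Type*} [RCLike 𝕜]
    {F G : ℤ × ℝ → 𝕜} (hF : Measurable F) (hG : Measurable G) (k : ℤ) (ξ : ℝ) :
    ‖∑' l : ℤ, ∫ η : ℝ, F (l, η) * G (k - l, ξ - η)‖ₑ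
      ≤ ((‖F ·‖ₑ) ⋆ₗ[Measure.count.prod volume] (‖G ·‖ₑ)) (k, ξ) := by
  rw [lconvolution_def, lintegral_count_prod _ (by fun_prop)]
  refine enorm_tsum_le_tsum_enorm.trans (ENNReal.tsum_le_tsum fun l => ?_)
  refine (enorm_integral_le_lintegral_enorm _).trans (lintegral_mono fun η => ?_)
  simp [neg_add_eq_sub]

theorem stmt14_general (b : ℝ) (hb : 0 ≤ b) (t : ℝ) (F G : ℤ × ℝ → ℂ)
    (hFm : Measurable F) (hGm : Measurable G)
    (Hc : ℤ × ℝ → ℂ)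
    (hH : ∀ (k : ℤ) (ξ : ℝ), Hc (k, ξ) = ∑' l : ℤ, ∫ η : ℝ, F (l, η) * G (k - l, ξ - η)) :
    (∑' k : ℤ, ∫⁻ ξ : ℝ,
        ENNReal.ofReal ((1 + (k : ℝ) ^ 2 + (ξ + (k : ℝ) * t) ^ 2) ^ b * ‖Hc (k, ξ)‖ ^ 2))
          ^ ((1 : ℝ) / 2)
      ≤ ENNReal.ofReal ((2 : ℝ) ^ b) *
          ((∑' l : ℤ, ∫⁻ η : ℝ, ENNReal.ofReal ‖F (l, η)‖) *
              (∑' l : ℤ, ∫⁻ η : ℝ, ENNReal.ofReal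
                ((1 + (l : ℝ) ^ 2 + (η + (l : ℝ) * t) ^ 2) ^ b * ‖G (l, η)‖ ^ 2)) ^ ((1 : ℝ) / 2)
            + (∑' l : ℤ, ∫⁻ η : ℝ, ENNReal.ofReal ‖G (l, η)‖) *
              (∑' l : ℤ, ∫⁻ η : ℝ, ENNReal.ofReal
                ((1 + (l : ℝ) ^ 2 + (η + (l : ℝ) * t) ^ 2) ^ b * ‖F (l, η)‖ ^ 2)) ^ ((1 : ℝ) / 2)) := by
  set μ : Measure (ℤ × ℝ) := Measure.count.prod volume
  set w := lambdaPow b t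
  have hw : Measurable w := measurable_lambdaPow b t
  have hf : Measurable (‖F ·‖ₑ) := hFm.enorm
  have hg : Measurable (‖G ·‖ₑ) := hGm.enorm
  set ψ₁ := (‖F ·‖ₑ) ⋆ₗ[μ] (w * (‖G ·‖ₑ))
  set ψ₂ := (‖G ·‖ₑ) ⋆ₗ[μ] (w * (‖F ·‖ₑ))
  have hweight (k : ℤ) (ξ : ℝ) : w (k, ξ) * ‖Hc (k, ξ)‖ₑ ≤ 2 ^ b * (ψ₁ + ψ₂) (k, ξ) := by
    rw [hH, Pi.add_apply, show ψ₂ = (w * (‖F ·‖ₑ)) ⋆ₗ[μ] (‖G ·‖ₑ) from lconvolution_comm]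
    exact (mul_le_mul_right (enorm_tsum_integral_mul_le_lconvolution hFm hGm k ξ) _).trans
      (lconvolution_weight_le hw hf hg (lambdaPow_add_le hb t) _)
  calc _ = (∑' k : ℤ, ∫⁻ ξ : ℝ, (w (k, ξ) * ‖Hc (k, ξ)‖ₑ) ^ 2) ^ (1 / 2 : ℝ) := by
        simp only [ofReal_lambdaSq_rpow_mul_sq]; rfl
    _ ≤ (∑' k : ℤ, ∫⁻ ξ : ℝ, (2 ^ b * (ψ₁ + ψ₂) (k, ξ)) ^ 2) ^ (1 / 2 : ℝ) := by
        gcongr ((∑' k : ℤ, ∫⁻ ξ : ℝ, ?_ ^ 2) ^ _) with k ξ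
        exact hweight k ξ
    _ = 2 ^ b * eLpNorm (ψ₁ + ψ₂) 2 μ := by
        rw [← eLpNorm_two_count_prod volume (φ := fun p => 2 ^ b * (ψ₁ + ψ₂) p) (by fun_prop),
          eLpNorm_two_const_mul (by fun_prop)]
    _ ≤ 2 ^ b * (eLpNorm ψ₁ 2 μ + eLpNorm ψ₂ 2 μ) := by
        gcongr; exact eLpNorm_add_le (by fun_prop) (by fun_prop) one_le_two
    _ ≤ 2 ^ b * ((∫⁻ p, ‖F p‖ₑ ∂μ) * eLpNorm (w * (‖G ·‖ₑ)) 2 μ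
          + (∫⁻ p, ‖G p‖ₑ ∂μ) * eLpNorm (w * (‖F ·‖ₑ)) 2 μ) := by
        gcongr
        exacts [eLpNorm_lconvolution_le hf (hw.mul hg), eLpNorm_lconvolution_le hg (hw.mul hf)]
    _ = _ := by
        simp only [μ, lintegral_count_prod volume hf, lintegral_count_prod volume hg,
          eLpNorm_two_count_prod volume (hw.mul hf), eLpNorm_two_count_prod volume (hw.mul hg),
          ofReal_norm, ofReal_lambdaSq_rpow_mul_sq, ← ENNReal.ofReal_rpow_of_pos two_pos,
          ENNReal.ofReal_ofNat]
        rfl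

/-- Fourier-variable form of the product estimate
`‖Λ_t^b(fg)‖_{L²} ≤ ‖f‖_{L^∞}‖Λ_t^b g‖_{L²} + ‖g‖_{L^∞}‖Λ_t^b f‖_{L²}` (Lemma 3.1):
for `b ≥ 0`, `t ∈ ℝ` and `H = F ∗ G` on `ℤ × ℝ`,
`‖Λ_t^b H‖_{L²} ≤ 2^b (‖F‖_{L¹}‖Λ_t^b G‖_{L²} + ‖G‖_{L¹}‖Λ_t^b F‖_{L²})`. -/
theorem stmt14 (b : ℝ) (hb : 0 ≤ b) (t : ℝ) (F G : ℤ × ℝ → ℂ)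
    (hFm : Measurable F) (hGm : Measurable G)
    (hF1 : (∑' l : ℤ, ∫⁻ η : ℝ, ENNReal.ofReal ‖F (l, η)‖) < ⊤)
    (hG1 : (∑' l : ℤ, ∫⁻ η : ℝ, ENNReal.ofReal ‖G (l, η)‖) < ⊤)
    (hF2 : (∑' l : ℤ, ∫⁻ η : ℝ,
        ENNReal.ofReal ((1 + (l : ℝ) ^ 2 + (η + (l : ℝ) * t) ^ 2) ^ b * ‖F (l, η)‖ ^ 2)) < ⊤)
    (hG2 : (∑' l : ℤ, ∫⁻ η : ℝ,
        ENNReal.ofReal ((1 + (l : ℝ) ^ 2 + (η + (l : ℝ) * t) ^ 2) ^ b * ‖G (l, η)‖ ^ 2)) < ⊤)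
    (Hc : ℤ × ℝ → ℂ)
    (hH : ∀ (k : ℤ) (ξ : ℝ), Hc (k, ξ) = ∑' l : ℤ, ∫ η : ℝ, F (l, η) * G (k - l, ξ - η)) :
    (∑' k : ℤ, ∫⁻ ξ : ℝ,
        ENNReal.ofReal ((1 + (k : ℝ) ^ 2 + (ξ + (k : ℝ) * t) ^ 2) ^ b * ‖Hc (k, ξ)‖ ^ 2))
          ^ ((1 : ℝ) / 2)
      ≤ ENNReal.ofReal ((2 : ℝ) ^ b) *
          ((∑' l : ℤ, ∫⁻ η : ℝ, ENNReal.ofReal ‖F (l, η)‖) *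
              (∑' l : ℤ, ∫⁻ η : ℝ, ENNReal.ofReal
                ((1 + (l : ℝ) ^ 2 + (η + (l : ℝ) * t) ^ 2) ^ b * ‖G (l, η)‖ ^ 2)) ^ ((1 : ℝ) / 2)
            + (∑' l : ℤ, ∫⁻ η : ℝ, ENNReal.ofReal ‖G (l, η)‖) *
              (∑' l : ℤ, ∫⁻ η : ℝ, ENNReal.ofReal
                ((1 + (l : ℝ) ^ 2 + (η + (l : ℝ) * t) ^ 2) ^ b * ‖F (l, η)‖ ^ 2)) ^ ((1 : ℝ) / 2)) :=
  stmt14_general b hb t F G hFm hGm Hc hH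
end

section
/- Fix b ∈ ℝ, t ∈ ℝ, and ξ ∈ ℝ, and for real k write Λ_t^c(k,ξ) = (1 + k² + (ξ + k·t)²)^{c/2}. Then for every real k ≠ 0, the derivative in k satisfies ∂_k Λ_t^b(k,ξ) = b·(k + (ξ + kt)·t)·Λ_t^{b−2}(k,ξ), and |∂_k Λ_t^b(k,ξ)| ≤ |b| · ( 2/|k| + |ξ|/k² ) · Λ_t^b(k,ξ). -/
/-
Write `η = ξ + kt`, so that `Λ² = 1 + k² + η²` and `∂_k Λ² = 2(k + ηt)`; the derivative formula
is the chain rule for `x ↦ x^{b/2}`. For the bound, `|kt| ≤ |ξ| + |η|` gives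
`k²|k + ηt| ≤ |k|³ + |k||η|(|ξ| + |η|)`, and by `2|k||η| ≤ k² + η²` this is at most
`(2|k| + |ξ|) Λ²`; dividing by `k² Λ²` turns `Λ^{b-2}` into `Λ^b / Λ²`.
-/

theorem hasDerivAt_one_add_sq_add_sq (t ξ k : ℝ) :
    HasDerivAt (fun k' : ℝ => 1 + k' ^ 2 + (ξ + k' * t) ^ 2)
      (2 * (k + (ξ + k * t) * t)) k := by
  refine ((((hasDerivAt_id' k).fun_pow 2).const_add 1).fun_add
    ((((hasDerivAt_id' k).mul_const t).const_add ξ).fun_pow 2)).congr_deriv ?_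
  norm_num
  ring

theorem abs_add_mul_mul_sq_le (t ξ k : ℝ) :
    |k + (ξ + k * t) * t| * k ^ 2 ≤ (2 * |k| + |ξ|) * (1 + k ^ 2 + (ξ + k * t) ^ 2) := by
  set η := ξ + k * t
  have h_kt : |k| * |t| ≤ |ξ| + |η| := by
    rw [← abs_mul, show k * t = η - ξ by ring]
    linarith [abs_sub η ξ]
  have h_num : |k + η * t| ≤ |k| + |η| * |t| := by
    simpa only [abs_mul] using abs_add_le k (η * t)
  rw [← sq_abs k, ← sq_abs η]
  nlinarith [abs_nonneg k, abs_nonneg η, abs_nonneg ξ, abs_nonneg t,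
    mul_le_mul_of_nonneg_left h_kt (mul_nonneg (abs_nonneg k) (abs_nonneg η)),
    mul_le_mul_of_nonneg_right h_num (sq_nonneg |k|),
    mul_nonneg (abs_nonneg ξ) (sq_nonneg (|k| - |η|))]

/-- Derivative bounds in the (real) frequency variable `k` for the symbol
`Λ_t^b(k,ξ) = (1 + k² + (ξ + kt)²)^{b/2}`: for `k ≠ 0`,
`∂_kΛ_t^b(k,ξ) = b(k + (ξ + kt)t)Λ_t^{b−2}(k,ξ)` and
`|∂_kΛ_t^b(k,ξ)| ≤ |b|(2/|k| + |ξ|/k²)Λ_t^b(k,ξ)`. -/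
theorem stmt17 (b t ξ : ℝ) (k : ℝ) (hk : k ≠ 0) :
    HasDerivAt (fun k' : ℝ => (1 + k' ^ 2 + (ξ + k' * t) ^ 2) ^ (b / 2))
        (b * (k + (ξ + k * t) * t) * (1 + k ^ 2 + (ξ + k * t) ^ 2) ^ ((b - 2) / 2)) k ∧
      |b * (k + (ξ + k * t) * t) * (1 + k ^ 2 + (ξ + k * t) ^ 2) ^ ((b - 2) / 2)|
        ≤ |b| * (2 / |k| + |ξ| / k ^ 2) * (1 + k ^ 2 + (ξ + k * t) ^ 2) ^ (b / 2) := by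
  set x := 1 + k ^ 2 + (ξ + k * t) ^ 2
  have hx : 0 < x := by positivity
  have h_exp : (b - 2) / 2 = b / 2 - 1 := by ring
  constructor
  · convert (hasDerivAt_one_add_sq_add_sq t ξ k).rpow_const (p := b / 2) (Or.inl hx.ne')
      using 1
    rw [h_exp]
    ring
  · have hk2 : 0 < k ^ 2 := by positivity
    have h_coeff : 2 / |k| + |ξ| / k ^ 2 = (2 * |k| + |ξ|) / k ^ 2 := by
      rw [← sq_abs k]
      field_simp
    rw [h_exp, Real.rpow_sub_one hx.ne', abs_mul, abs_mul, abs_div, abs_of_pos hx,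
      abs_of_pos (Real.rpow_pos_of_pos hx _), h_coeff, mul_assoc, mul_assoc]
    refine mul_le_mul_of_nonneg_left ?_ (abs_nonneg b)
    rw [mul_div_assoc', div_mul_eq_mul_div, div_le_div_iff₀ hx hk2]
    nlinarith [abs_add_mul_mul_sq_le t ξ k, Real.rpow_pos_of_pos hx (b / 2)]
end
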